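/- The map M ↦ t₊(M) is strictly monotone increasing and continuous on (−1/(3√3), ∞) and maps this interval bijectively onto (1/√3, ∞). Consequently, for every X ∈ (−1/3, 0) there exists a unique M > −1/(3√3) such that −1/(9·t₊(M)²) = X. -/

import Mathlib

/-!
On `[1/√3, ∞)` the cubic `t ↦ (t³ - t)/2` is strictly increasing (its derivative `(3t² - 1)/2` is
positive there), equals `-1/(3√3)` at `1/√3` and tends to `∞`, so it maps `(1/√3, ∞)` bijectively
onto `(-1/(3√3), ∞)`. For `M > -1/(3√3)` the largest root `t₊(M)` of `t³ - t - 2M` therefore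
exceeds `1/√3`, and `t₊` is the inverse of this branch; as the inverse of a strictly increasing map
between open intervals it is strictly increasing and continuous. The last claim follows because
`t ↦ -1/(9t²)` maps `(1/√3, ∞)` bijectively onto `(-1/3, 0)`.
-/

open Set Filter

section InverseFunctions

variable {α β : Type*} [LinearOrder α] [LinearOrder β] {f : α → β} {g : β → α} {s : Set α}
  {t : Set β}

theorem StrictMonoOn.strictMonoOn_of_leftInvOn (hf : StrictMonoOn f s) (hfg : LeftInvOn f g t)
    (hg : MapsTo g t s) : StrictMonoOn g t := fun a ha b hb hab =>
  (hf.lt_iff_lt (hg ha) (hg hb)).1 (by rwa [hfg ha, hfg hb])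

theorem StrictMonoOn.continuousOn_of_isOpen_image [TopologicalSpace α] [OrderTopology α]
    [TopologicalSpace β] [OrderTopology β] [DenselyOrdered β] (hf : StrictMonoOn f s)
    (hs : IsOpen s) (hfs : IsOpen (f '' s)) : ContinuousOn f s := fun _ ha =>
  (hf.continuousAt_of_image_mem_nhds (hs.mem_nhds ha)
    (hfs.mem_nhds (mem_image_of_mem f ha))).continuousWithinAt

end InverseFunctions

theorem Set.BijOn.existsUnique_of_mem {α β : Type*} {f : α → β} {s : Set α} {t : Set β}
    (hf : BijOn f s t) {y : β} (hy : y ∈ t) : ∃! x, x ∈ s ∧ f x = y := by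
  obtain ⟨x, hx, rfl⟩ := hf.surjOn hy
  exact ⟨x, ⟨hx, rfl⟩, fun x' hx' => hf.injOn hx'.1 hx hx'.2⟩

theorem inv_three_lt_sq_of_inv_sqrt_three_lt {t : ℝ} (ht : 1 / √3 < t) : 1 / 3 < t ^ 2 := by
  have h := pow_lt_pow_left₀ ht (by positivity) two_ne_zero
  rwa [div_pow, Real.sq_sqrt (by norm_num), one_pow] at h

noncomputable def halfCubic (t : ℝ) : ℝ := (t ^ 3 - t) / 2

theorem halfCubic_eq_iff {t M : ℝ} : halfCubic t = M ↔ t ^ 3 - t - 2 * M = 0 := by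
  unfold halfCubic
  constructor <;> intro h <;> linarith

theorem halfCubic_inv_sqrt_three : halfCubic (1 / √3) = -1 / (3 * √3) := by
  have h3 : √3 ^ 2 = 3 := Real.sq_sqrt (by norm_num)
  unfold halfCubic
  field_simp
  linear_combination -h3

theorem hasDerivAt_halfCubic (t : ℝ) : HasDerivAt halfCubic ((3 * t ^ 2 - 1) / 2) t := by
  unfold halfCubic
  exact (((hasDerivAt_pow 3 t).sub (hasDerivAt_id' t)).div_const 2).congr_deriv (by norm_num)

theorem continuous_halfCubic : Continuous halfCubic := by
  unfold halfCubic
  fun_prop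

theorem strictMonoOn_halfCubic : StrictMonoOn halfCubic (Ici (1 / √3)) := by
  refine strictMonoOn_of_deriv_pos (convex_Ici _) continuous_halfCubic.continuousOn fun t ht => ?_
  rw [interior_Ici] at ht
  rw [(hasDerivAt_halfCubic t).deriv]
  linarith [inv_three_lt_sq_of_inv_sqrt_three_lt ht]

theorem tendsto_halfCubic_atTop : Tendsto halfCubic atTop atTop := by
  have h : Tendsto (fun t : ℝ => t * (t ^ 2 - 1)) atTop atTop :=
    tendsto_id.atTop_mul_atTop₀
      (tendsto_atTop_add_const_right _ (-1) (tendsto_pow_atTop two_ne_zero))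
  refine (h.atTop_div_const two_pos).congr fun t => ?_
  unfold halfCubic
  ring

theorem bijOn_halfCubic : BijOn halfCubic (Ioi (1 / √3)) (Ioi (-1 / (3 * √3))) := by
  have hmono := strictMonoOn_halfCubic.mono Ioi_subset_Ici_self
  refine ⟨fun t ht => ?_, hmono.injOn, ?_⟩
  · rw [← halfCubic_inv_sqrt_three]
    exact strictMonoOn_halfCubic self_mem_Ici (mem_Ici_of_Ioi ht) ht
  · rw [← halfCubic_inv_sqrt_three]
    exact intermediate_value_Ioi continuous_halfCubic.continuousOn tendsto_halfCubic_atTop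

theorem inv_sqrt_three_lt_of_isGreatest {M t : ℝ} (hM : -1 / (3 * √3) < M)
    (ht : IsGreatest {s : ℝ | s ^ 3 - s - 2 * M = 0} t) : 1 / √3 < t := by
  obtain ⟨s, hs, hsM⟩ := bijOn_halfCubic.surjOn hM
  exact lt_of_lt_of_le hs (ht.2 (halfCubic_eq_iff.1 hsM))

theorem bijOn_neg_one_div_nine_mul_sq :
    BijOn (fun t : ℝ => -1 / (9 * t ^ 2)) (Ioi (1 / √3)) (Ioo (-1 / 3) 0) := by
  refine ⟨fun t ht => ?_, ?_, fun X ⟨hX₁, hX₂⟩ => ?_⟩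
  · have h9 : 3 < 9 * t ^ 2 := by linarith [inv_three_lt_sq_of_inv_sqrt_three_lt ht]
    refine ⟨?_, div_neg_of_neg_of_pos (by norm_num) (by positivity)⟩
    show -1 / 3 < -1 / (9 * t ^ 2)
    rw [neg_div, neg_div, neg_lt_neg_iff]
    exact one_div_lt_one_div_of_lt (by norm_num) h9
  · refine StrictMonoOn.injOn (fun a (ha : 0 < a) b _ hab => ?_) |>.mono
      (Ioi_subset_Ioi (by positivity))
    simp only [neg_div]
    gcongr
  · refine ⟨1 / √(-9 * X), ?_, ?_⟩
    · exact one_div_lt_one_div_of_lt (Real.sqrt_pos.2 (by linarith))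
        (Real.sqrt_lt_sqrt (by linarith) (by linarith))
    · simp only [div_pow, one_pow, Real.sq_sqrt (by linarith : 0 ≤ -9 * X)]
      field_simp

theorem t_plus_monotone_bijective (tplus : ℝ → ℝ)
    (ht : ∀ M : ℝ, -1 / (3 * Real.sqrt 3) < M →
      IsGreatest {s : ℝ | s ^ 3 - s - 2 * M = 0} (tplus M)) :
    StrictMonoOn tplus (Set.Ioi (-1 / (3 * Real.sqrt 3))) ∧
    ContinuousOn tplus (Set.Ioi (-1 / (3 * Real.sqrt 3))) ∧
    Set.BijOn tplus (Set.Ioi (-1 / (3 * Real.sqrt 3))) (Set.Ioi (1 / Real.sqrt 3)) ∧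
    (∀ X : ℝ, -1/3 < X → X < 0 →
      ∃! M : ℝ, -1 / (3 * Real.sqrt 3) < M ∧ -1 / (9 * (tplus M) ^ 2) = X) := by
  have hmaps : MapsTo tplus (Ioi (-1 / (3 * √3))) (Ioi (1 / √3)) := fun M hM =>
    inv_sqrt_three_lt_of_isGreatest hM (ht M hM)
  have hleft : LeftInvOn halfCubic tplus (Ioi (-1 / (3 * √3))) := fun M hM =>
    halfCubic_eq_iff.2 (ht M hM).1
  have hbij : BijOn tplus (Ioi (-1 / (3 * √3))) (Ioi (1 / √3)) :=
    bijOn_halfCubic.symm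
      ⟨hleft, bijOn_halfCubic.injOn.rightInvOn_of_leftInvOn hleft bijOn_halfCubic.mapsTo hmaps⟩
  have hmono : StrictMonoOn tplus (Ioi (-1 / (3 * √3))) :=
    (strictMonoOn_halfCubic.mono Ioi_subset_Ici_self).strictMonoOn_of_leftInvOn hleft hmaps
  exact ⟨hmono, hmono.continuousOn_of_isOpen_image isOpen_Ioi (hbij.image_eq ▸ isOpen_Ioi),
    hbij, fun X hX₁ hX₂ =>
      (bijOn_neg_one_div_nine_mul_sq.comp hbij).existsUnique_of_mem ⟨hX₁, hX₂⟩⟩
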